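/- arXiv:1703.10723 — 3 statements merged into one kernel-verified Lean document; each statement's English description precedes it below -/
import Mathlib

section
/- Let the Euclidean plane ℝ² be coloured in red and blue so that there is no red ℓ₂ and no blue ℓ₅. Then there are no three blue points forming an equilateral triangle with side length 3 whose centre (centroid) is a red point. -/
/-!
Let `O` be the red centroid of the blue triangle `ABC`. Every point at distance `1` from `O` is
blue. For a side `XY` with third vertex `Z`, the trisection points `X + (Y - X)/3` and
`X + 2(Y - X)/3` lie at distance `|XZ|/3 = 1` and `|YZ|/3 = 1` from `O`, so they are blue, and
prolonging the side beyond `X` by one third forces `X - (Y - X)/3` to be red, otherwise there is a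
blue ℓ₅. Doing this for the sides `AB` and `AC` gives two red points at distance `|BC|/3 = 1`.
-/

/-- The two colours. -/
inductive Color
  | red
  | blue

/-- The Euclidean plane ℝ². -/
abbrev Plane : Type := EuclideanSpace ℝ (Fin 2)

/-- The point of the plane with coordinates `(x, y)`. -/
noncomputable def pt (x y : ℝ) : Plane := (WithLp.equiv 2 (Fin 2 → ℝ)).symm ![x, y]

/-- There is no red ℓ₂, i.e. no two red points at Euclidean distance 1. -/
def NoRedL2 (c : Plane → Color) : Prop :=
  ∀ x y : Plane, c x = Color.red → c y = Color.red → dist x y ≠ 1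

/-- There is a blue ℓ₅: a point `p` and a unit vector `w` such that
`p, p+w, p+2w, p+3w, p+4w` are all blue. -/
def HasBlueL5 (c : Plane → Color) : Prop :=
  ∃ p w : Plane, ‖w‖ = 1 ∧ ∀ i : Fin 5, c (p + (i : ℝ) • w) = Color.blue

lemma norm_inv_three_smul_sub {E : Type*} [NormedAddCommGroup E] [NormedSpace ℝ E] {x y : E}
    (h : dist x y = 3) : ‖(3⁻¹ : ℝ) • (y - x)‖ = 1 := by
  rw [norm_smul, ← dist_eq_norm', h]
  norm_num

lemma dist_eq_one_of_sub_eq_inv_three_smul {E : Type*} [NormedAddCommGroup E] [NormedSpace ℝ E]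
    {p q x y : E} (h : dist x y = 3) (hpq : p - q = (3⁻¹ : ℝ) • (y - x)) : dist p q = 1 := by
  rw [dist_eq_norm, hpq, norm_inv_three_smul_sub h]

lemma NoRedL2.blue_of_dist_eq_one {c : Plane → Color} (hred : NoRedL2 c) {o x : Plane}
    (ho : c o = Color.red) (hx : dist o x = 1) : c x = Color.blue := by
  cases h : c x with
  | red => exact absurd hx (hred o x ho h)
  | blue => rfl

lemma hasBlueL5_of_blue {c : Plane → Color} {p w : Plane} (hw : ‖w‖ = 1)
    (h0 : c p = Color.blue) (h1 : c (p + w) = Color.blue) (h2 : c (p + (2 : ℝ) • w) = Color.blue)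
    (h3 : c (p + (3 : ℝ) • w) = Color.blue) (h4 : c (p + (4 : ℝ) • w) = Color.blue) :
    HasBlueL5 c := by
  refine ⟨p, w, hw, fun i => ?_⟩
  fin_cases i
  · simpa using h0
  · simpa using h1
  · simpa using h2
  · simpa using h3
  · simpa using h4

lemma red_sub_of_blue_trisection {c : Plane → Color} (hblue : ¬ HasBlueL5 c) {X Y : Plane}
    (hXY : dist X Y = 3) (hX : c X = Color.blue) (hY : c Y = Color.blue)
    (h1 : c (X + (3⁻¹ : ℝ) • (Y - X)) = Color.blue)
    (h2 : c (X + (2 : ℝ) • (3⁻¹ : ℝ) • (Y - X)) = Color.blue) :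
    c (X - (3⁻¹ : ℝ) • (Y - X)) = Color.red := by
  cases hP : c (X - (3⁻¹ : ℝ) • (Y - X)) with
  | red => rfl
  | blue =>
    refine absurd (hasBlueL5_of_blue (norm_inv_three_smul_sub hXY) hP ?_ ?_ ?_ ?_) hblue
    · convert hX using 2; module
    · convert h1 using 2; module
    · convert h2 using 2; module
    · convert hY using 2; module

lemma red_sub_of_red_centroid {c : Plane → Color} (hred : NoRedL2 c) (hblue : ¬ HasBlueL5 c)
    {X Y Z : Plane} (hO : c ((3⁻¹ : ℝ) • (X + Y + Z)) = Color.red)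
    (hX : c X = Color.blue) (hY : c Y = Color.blue)
    (hXY : dist X Y = 3) (hXZ : dist X Z = 3) (hYZ : dist Y Z = 3) :
    c (X - (3⁻¹ : ℝ) • (Y - X)) = Color.red := by
  refine red_sub_of_blue_trisection hblue hXY hX hY
    (hred.blue_of_dist_eq_one hO (dist_eq_one_of_sub_eq_inv_three_smul hXZ ?_))
    (hred.blue_of_dist_eq_one hO (dist_eq_one_of_sub_eq_inv_three_smul hYZ ?_)) <;> module

/-- no red ℓ₂ and no blue ℓ₅ imply there are no three blue points
forming an equilateral triangle of side length 3 with a red centroid. -/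
theorem stmt_1 (c : Plane → Color) (hred : NoRedL2 c) (hblue : ¬ HasBlueL5 c) :
    ¬ ∃ A B C : Plane,
        c A = Color.blue ∧ c B = Color.blue ∧ c C = Color.blue ∧
        dist A B = 3 ∧ dist B C = 3 ∧ dist A C = 3 ∧
        c ((3⁻¹ : ℝ) • (A + B + C)) = Color.red := by
  rintro ⟨A, B, C, hA, hB, hC, hAB, hBC, hAC, hO⟩
  have hP : c (A - (3⁻¹ : ℝ) • (B - A)) = Color.red :=
    red_sub_of_red_centroid hred hblue hO hA hB hAB hAC hBC
  have hQ : c (A - (3⁻¹ : ℝ) • (C - A)) = Color.red :=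
    red_sub_of_red_centroid hred hblue (by rwa [add_right_comm]) hA hC hAC hAB
      (dist_comm B C ▸ hBC)
  exact hred _ _ hP hQ (dist_eq_one_of_sub_eq_inv_three_smul hBC (by module))
end

section
/- Let the Euclidean plane ℝ² be coloured in red and blue so that there is no red ℓ₂ and no blue ℓ₅. Then there are no three red points forming an equilateral triangle with side length √3 whose centre (centroid) is a red point. -/
section Centroid

variable {E : Type*} [NormedAddCommGroup E] [InnerProductSpace ℝ E]

/-- `A - G` is a third of `(A - B) + (A - C)`, whose norm the parallelogram law computes
from the side lengths. -/
theorem nine_mul_dist_centroid_sq (A B C : E) :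
    9 * dist A ((3⁻¹ : ℝ) • (A + B + C)) ^ 2 =
      2 * dist A B ^ 2 + 2 * dist A C ^ 2 - dist B C ^ 2 := by
  have hG : A - (3⁻¹ : ℝ) • (A + B + C) = (3⁻¹ : ℝ) • ((A - B) + (A - C)) := by module
  have hBC : (A - B) - (A - C) = C - B := by abel
  have hpar := parallelogram_law_with_norm ℝ (A - B) (A - C)
  rw [hBC] at hpar
  rw [dist_comm B C]
  simp only [dist_eq_norm, hG, norm_smul, mul_pow]
  norm_num
  linarith

theorem dist_centroid_of_equilateral {A B C : E} {s : ℝ}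
    (hAB : dist A B = s) (hBC : dist B C = s) (hAC : dist A C = s) :
    dist A ((3⁻¹ : ℝ) • (A + B + C)) = s / √3 := by
  have hs : 0 ≤ s := hAB ▸ dist_nonneg
  have h3 : (0 : ℝ) < √3 := by positivity
  have hsq := nine_mul_dist_centroid_sq A B C
  rw [hAB, hBC, hAC] at hsq
  rw [eq_div_iff h3.ne']
  refine (pow_left_inj₀ (by positivity) hs two_ne_zero).1 ?_
  rw [mul_pow, Real.sq_sqrt zero_le_three]
  linarith

end Centroid

theorem stmt_2_general (c : Plane → Color) (hred : NoRedL2 c) :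
    ¬ ∃ A B C : Plane,
        c A = Color.red ∧ c B = Color.red ∧ c C = Color.red ∧
        dist A B = Real.sqrt 3 ∧ dist B C = Real.sqrt 3 ∧ dist A C = Real.sqrt 3 ∧
        c ((3⁻¹ : ℝ) • (A + B + C)) = Color.red := by
  rintro ⟨A, B, C, hA, -, -, hAB, hBC, hAC, hG⟩
  refine hred A _ hA hG ?_
  rw [dist_centroid_of_equilateral hAB hBC hAC, div_self (by positivity)]

/-- no red ℓ₂ and no blue ℓ₅ imply there are no three red points
forming an equilateral triangle of side length √3 with a red centroid. -/
theorem stmt_2 (c : Plane → Color) (hred : NoRedL2 c) (hblue : ¬ HasBlueL5 c) :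
    ¬ ∃ A B C : Plane,
        c A = Color.red ∧ c B = Color.red ∧ c C = Color.red ∧
        dist A B = Real.sqrt 3 ∧ dist B C = Real.sqrt 3 ∧ dist A C = Real.sqrt 3 ∧
        c ((3⁻¹ : ℝ) • (A + B + C)) = Color.red :=
  stmt_2_general c hred
end

section
/- Let the Euclidean plane ℝ² be coloured in red and blue so that there is no red ℓ₂ and no blue ℓ₅. Let 𝔏 = {p + m·u + n·v : m, n ∈ ℤ} be a unit triangular lattice (u, v unit vectors with ⟨u,v⟩ = 1/2), and suppose 𝔏 does not contain three red points forming an equilateral triangle with side length √3. If A and B are red points of 𝔏 with Euclidean distance |AB| = √3, then every lattice point on the line through A and B is red; that is, A + k·(B − A) is red for every integer k. -/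
/-!
Every lattice vector of length `√3` is `u' + v'` for unit lattice vectors
`u', v'` at angle 60°, so it suffices to show: if `X` and `X + u' + v'` are red, so is
`X + 2(u' + v')`. The two lattice points `X + 2u' - v'` and `X + 2v' - u'` complete red
√3-triangles, hence are not red. Together with the four unit neighbours of `X` and `X + u' + v'`
they force, through two lines of five points with unit spacing that would otherwise be blue,
first `X + 3v' - 2u'` and then `X + 2u' + 2v'` to be red. Applying this to `d = B - A` and to
`-d` propagates red along the whole line.
-/

open RealInnerProductSpace

lemma Int.forall_of_two_step {P : ℤ → Prop} (h₀ : P 0) (h₁ : P 1)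
    (hup : ∀ k, P k → P (k + 1) → P (k + 2)) (hdown : ∀ k, P (k + 1) → P k → P (k - 1)) :
    ∀ k, P k := by
  suffices h : ∀ k, P k ∧ P (k + 1) from fun k => (h k).1
  intro k
  induction k using Int.induction_on with
  | zero => exact ⟨h₀, h₁⟩
  | succ k ih => exact ⟨ih.2, by simpa [add_assoc] using hup _ ih.1 ih.2⟩
  | pred k ih => exact ⟨hdown _ ih.2 ih.1, by simpa using ih.1⟩

lemma Color.eq_blue_of_ne_red {x : Color} (h : x ≠ Color.red) : x = Color.blue := by
  cases x
  · exact absurd rfl h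
  · rfl

lemma int_sq_add_mul_add_sq_eq_three {a b : ℤ} (h : a ^ 2 + a * b + b ^ 2 = 3) :
    (a = 1 ∧ b = 1) ∨ (a = -1 ∧ b = -1) ∨ (a = 2 ∧ b = -1) ∨ (a = -2 ∧ b = 1) ∨
      (a = -1 ∧ b = 2) ∨ (a = 1 ∧ b = -2) := by
  have ha : a ^ 2 ≤ 4 := by nlinarith [sq_nonneg (a + 2 * b)]
  have hb : b ^ 2 ≤ 4 := by nlinarith [sq_nonneg (2 * a + b)]
  have ha1 : -2 ≤ a := by nlinarith
  have ha2 : a ≤ 2 := by nlinarith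
  have hb1 : -2 ≤ b := by nlinarith
  have hb2 : b ≤ 2 := by nlinarith
  interval_cases a <;> interval_cases b <;> omega

/-- The last equation says that `a₁ • u + b₁ • v` and `a₂ • u + b₂ • v` have inner product `1/2`
in a triangular basis `u, v`. -/
lemma exists_int_split_of_sq_add_mul_add_sq_eq_three {a b : ℤ}
    (h : a ^ 2 + a * b + b ^ 2 = 3) :
    ∃ a₁ b₁ a₂ b₂ : ℤ, a₁ + a₂ = a ∧ b₁ + b₂ = b ∧
      a₁ ^ 2 + a₁ * b₁ + b₁ ^ 2 = 1 ∧ a₂ ^ 2 + a₂ * b₂ + b₂ ^ 2 = 1 ∧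
      2 * a₁ * a₂ + a₁ * b₂ + a₂ * b₁ + 2 * b₁ * b₂ = 1 := by
  rcases int_sq_add_mul_add_sq_eq_three h with
    ⟨rfl, rfl⟩ | ⟨rfl, rfl⟩ | ⟨rfl, rfl⟩ | ⟨rfl, rfl⟩ | ⟨rfl, rfl⟩ | ⟨rfl, rfl⟩
  · exact ⟨1, 0, 0, 1, by norm_num⟩
  · exact ⟨-1, 0, 0, -1, by norm_num⟩
  · exact ⟨1, 0, 1, -1, by norm_num⟩
  · exact ⟨-1, 0, -1, 1, by norm_num⟩
  · exact ⟨0, 1, -1, 1, by norm_num⟩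
  · exact ⟨0, -1, 1, -1, by norm_num⟩

section TriangularBasis

variable {E : Type*} [NormedAddCommGroup E] [InnerProductSpace ℝ E] {u v : E}

lemma inner_smul_add_smul_of_triangular (hu : ‖u‖ = 1) (hv : ‖v‖ = 1) (huv : ⟪u, v⟫ = 1 / 2)
    (a b a' b' : ℝ) :
    ⟪a • u + b • v, a' • u + b' • v⟫ = a * a' + (a * b' + a' * b) / 2 + b * b' := by
  have huu : ⟪u, u⟫ = 1 := by rw [real_inner_self_eq_norm_sq, hu, one_pow]
  have hvv : ⟪v, v⟫ = 1 := by rw [real_inner_self_eq_norm_sq, hv, one_pow]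
  have hvu : ⟪v, u⟫ = 1 / 2 := by rw [real_inner_comm, huv]
  simp only [inner_add_left, inner_add_right, real_inner_smul_left, real_inner_smul_right,
    huu, hvv, huv, hvu]
  ring

lemma norm_smul_add_smul_of_triangular (hu : ‖u‖ = 1) (hv : ‖v‖ = 1) (huv : ⟪u, v⟫ = 1 / 2)
    (a b : ℝ) : ‖a • u + b • v‖ = √(a ^ 2 + a * b + b ^ 2) := by
  rw [← Real.sqrt_sq (norm_nonneg _), ← real_inner_self_eq_norm_sq,
    inner_smul_add_smul_of_triangular hu hv huv]
  congr 1
  ring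

lemma exists_triangular_split_of_norm_eq_sqrt_three {w : E} (hu : ‖u‖ = 1) (hv : ‖v‖ = 1)
    (huv : ⟪u, v⟫ = 1 / 2) (hw : w ∈ AddSubgroup.closure {u, v}) (hw3 : ‖w‖ = √3) :
    ∃ u' ∈ AddSubgroup.closure {u, v}, ∃ v' ∈ AddSubgroup.closure {u, v},
      ‖u'‖ = 1 ∧ ‖v'‖ = 1 ∧ ⟪u', v'⟫ = 1 / 2 ∧ w = u' + v' := by
  obtain ⟨a, b, rfl⟩ := AddSubgroup.mem_closure_pair.1 hw
  simp only [← Int.cast_smul_eq_zsmul ℝ] at hw3 ⊢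
  have hab : a ^ 2 + a * b + b ^ 2 = 3 := by
    rw [norm_smul_add_smul_of_triangular hu hv huv,
      Real.sqrt_inj (by nlinarith [sq_nonneg ((a : ℝ) + b)]) (by norm_num)] at hw3
    exact_mod_cast hw3
  obtain ⟨a₁, b₁, a₂, b₂, rfl, rfl, h₁, h₂, h₁₂⟩ :=
    exists_int_split_of_sq_add_mul_add_sq_eq_three hab
  have mem : ∀ m n : ℤ, (m : ℝ) • u + (n : ℝ) • v ∈ AddSubgroup.closure {u, v} := fun m n =>
    AddSubgroup.mem_closure_pair.2 ⟨m, n, by simp only [← Int.cast_smul_eq_zsmul ℝ]⟩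
  refine ⟨_, mem a₁ b₁, _, mem a₂ b₂, ?_, ?_, ?_, ?_⟩
  · have h₁' : (a₁ : ℝ) ^ 2 + a₁ * b₁ + b₁ ^ 2 = 1 := by exact_mod_cast h₁
    rw [norm_smul_add_smul_of_triangular hu hv huv, h₁', Real.sqrt_one]
  · have h₂' : (a₂ : ℝ) ^ 2 + a₂ * b₂ + b₂ ^ 2 = 1 := by exact_mod_cast h₂
    rw [norm_smul_add_smul_of_triangular hu hv huv, h₂', Real.sqrt_one]
  · rw [inner_smul_add_smul_of_triangular hu hv huv]
    have : ((2 * a₁ * a₂ + a₁ * b₂ + a₂ * b₁ + 2 * b₁ * b₂ : ℤ) : ℝ) = 1 := by exact_mod_cast h₁₂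
    push_cast at this
    linarith
  · push_cast
    module

end TriangularBasis

section Lattice

variable {E : Type*} [AddCommGroup E] [Module ℝ E] {u v : E}

lemma add_mem_of_mem_closure_pair {p x w : E}
    (hx : x ∈ {x : E | ∃ m n : ℤ, x = p + (m : ℝ) • u + (n : ℝ) • v})
    (hw : w ∈ AddSubgroup.closure {u, v}) :
    x + w ∈ {x : E | ∃ m n : ℤ, x = p + (m : ℝ) • u + (n : ℝ) • v} := by
  obtain ⟨m, n, rfl⟩ := hx
  obtain ⟨m', n', rfl⟩ := AddSubgroup.mem_closure_pair.1 hw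
  exact ⟨m + m', n + n', by simp only [← Int.cast_smul_eq_zsmul ℝ]; push_cast; module⟩

lemma sub_mem_closure_pair {p x y : E}
    (hx : x ∈ {x : E | ∃ m n : ℤ, x = p + (m : ℝ) • u + (n : ℝ) • v})
    (hy : y ∈ {x : E | ∃ m n : ℤ, x = p + (m : ℝ) • u + (n : ℝ) • v}) :
    y - x ∈ AddSubgroup.closure {u, v} := by
  obtain ⟨m, n, rfl⟩ := hx
  obtain ⟨m', n', rfl⟩ := hy
  refine AddSubgroup.mem_closure_pair.2 ⟨m' - m, n' - n, ?_⟩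
  simp only [← Int.cast_smul_eq_zsmul ℝ]
  push_cast
  module

end Lattice

def HasRedEquilateral (c : Plane → Color) (L : Set Plane) (r : ℝ) : Prop :=
  ∃ A B C : Plane, A ∈ L ∧ B ∈ L ∧ C ∈ L ∧
    c A = Color.red ∧ c B = Color.red ∧ c C = Color.red ∧
    dist A B = r ∧ dist B C = r ∧ dist A C = r

section Colouring

variable {c : Plane → Color}

lemma NoRedL2.ne_red (hred : NoRedL2 c) {x y : Plane} (hx : c x = Color.red)
    (hxy : ‖x - y‖ = 1) : c y ≠ Color.red :=
  fun hy => hred x y hx hy (by rwa [dist_eq_norm])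

lemma red_of_not_hasBlueL5 (hblue : ¬ HasBlueL5 c) {p w : Plane} (hw : ‖w‖ = 1)
    (h₁ : c (p + w) ≠ Color.red) (h₂ : c (p + (2 : ℝ) • w) ≠ Color.red)
    (h₃ : c (p + (3 : ℝ) • w) ≠ Color.red) (h₄ : c (p + (4 : ℝ) • w) ≠ Color.red) :
    c p = Color.red := by
  by_contra h₀
  refine hblue ⟨p, w, hw, fun i => Color.eq_blue_of_ne_red ?_⟩
  fin_cases i <;> simpa

lemma red_add_two_smul_add (hred : NoRedL2 c) (hblue : ¬ HasBlueL5 c) {u v x : Plane}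
    (hu : ‖u‖ = 1) (hv : ‖v‖ = 1) (huv : ⟪u, v⟫ = 1 / 2)
    (hx : c x = Color.red) (hxuv : c (x + (u + v)) = Color.red)
    (hC : c (x + (2 : ℝ) • u - v) ≠ Color.red) (hC' : c (x + (2 : ℝ) • v - u) ≠ Color.red) :
    c (x + (2 : ℝ) • (u + v)) = Color.red := by
  have huv1 : ‖u - v‖ = 1 := by
    simpa [sub_eq_add_neg] using norm_smul_add_smul_of_triangular hu hv huv 1 (-1)
  have hxu : c (x + u) ≠ Color.red := hred.ne_red hx (by simp [hu])
  have hxv : c (x + v) ≠ Color.red := hred.ne_red hx (by simp [hv])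
  have hD : c (x + (3 : ℝ) • v - (2 : ℝ) • u) = Color.red := by
    refine red_of_not_hasBlueL5 hblue huv1 ?_ ?_ ?_ ?_
    · convert hC' using 2; module
    · convert hxv using 2; module
    · convert hxu using 2; module
    · convert hC using 2; module
  have hE : c (x + (2 : ℝ) • v - (2 : ℝ) • u) ≠ Color.red :=
    hred.ne_red hD (by rw [← hv]; congr 1; module)
  have hF : c (x + (2 : ℝ) • v) ≠ Color.red :=
    hred.ne_red hxuv (by rw [← huv1]; congr 1; module)
  have hG : c (x + (u + v) + v) ≠ Color.red := hred.ne_red hxuv (by simp [hv])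
  refine red_of_not_hasBlueL5 hblue (w := -u) (by rw [norm_neg, hu]) ?_ ?_ ?_ ?_
  · convert hG using 2; module
  · convert hF using 2; module
  · convert hC' using 2; module
  · convert hE using 2; module

lemma red_add_two_smul_add_of_lattice (hred : NoRedL2 c) (hblue : ¬ HasBlueL5 c)
    {Λ : AddSubgroup Plane} {L : Set Plane} (hL : ∀ x ∈ L, ∀ w ∈ Λ, x + w ∈ L)
    (hnotri : ¬ HasRedEquilateral c L √3) {u v x : Plane} (huΛ : u ∈ Λ) (hvΛ : v ∈ Λ)
    (hu : ‖u‖ = 1) (hv : ‖v‖ = 1) (huv : ⟪u, v⟫ = 1 / 2) (hxL : x ∈ L)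
    (hx : c x = Color.red) (hxuv : c (x + (u + v)) = Color.red) :
    c (x + (2 : ℝ) • (u + v)) = Color.red := by
  have dist_eq : ∀ (y z : Plane) (a b : ℝ), z - y = a • u + b • v →
      a ^ 2 + a * b + b ^ 2 = 3 → dist y z = √3 := by
    intro y z a b hyz hab
    rw [dist_comm, dist_eq_norm, hyz, norm_smul_add_smul_of_triangular hu hv huv, hab]
  have mem : ∀ a b : ℤ, x + (a : ℝ) • u + (b : ℝ) • v ∈ L := fun a b => by
    simpa only [Int.cast_smul_eq_zsmul, add_assoc] using
      hL x hxL _ (Λ.add_mem (Λ.zsmul_mem huΛ a) (Λ.zsmul_mem hvΛ b))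
  have apex_ne_red : ∀ (a b : ℤ), (a : ℝ) ^ 2 + a * b + b ^ 2 = 3 →
      ((a : ℝ) - 1) ^ 2 + (a - 1) * (b - 1) + (b - 1) ^ 2 = 3 →
      c (x + (a : ℝ) • u + (b : ℝ) • v) ≠ Color.red := by
    intro a b h₀ h₁ hz
    refine hnotri ⟨x, x + (u + v), _, hxL, ?_, mem a b, hx, hxuv, hz,
      dist_eq _ _ 1 1 (by module) (by norm_num), dist_eq _ _ (a - 1) (b - 1) (by module) h₁,
      dist_eq _ _ a b (by module) h₀⟩
    simpa [add_assoc] using mem 1 1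
  refine red_add_two_smul_add hred hblue hu hv huv hx hxuv ?_ ?_
  · convert apex_ne_red 2 (-1) (by norm_num) (by norm_num) using 2; push_cast; module
  · convert apex_ne_red (-1) 2 (by norm_num) (by norm_num) using 2; push_cast; module

lemma red_add_two_smul_of_mem_closure_pair (hred : NoRedL2 c) (hblue : ¬ HasBlueL5 c)
    {u v : Plane} (hu : ‖u‖ = 1) (hv : ‖v‖ = 1) (huv : ⟪u, v⟫ = 1 / 2) {L : Set Plane}
    (hL : ∀ x ∈ L, ∀ w ∈ AddSubgroup.closure {u, v}, x + w ∈ L)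
    (hnotri : ¬ HasRedEquilateral c L √3) {x w : Plane} (hxL : x ∈ L)
    (hw : w ∈ AddSubgroup.closure {u, v}) (hw3 : ‖w‖ = √3)
    (hx : c x = Color.red) (hxw : c (x + w) = Color.red) :
    c (x + (2 : ℝ) • w) = Color.red := by
  obtain ⟨u', hu'Λ, v', hv'Λ, hu', hv', huv', rfl⟩ :=
    exists_triangular_split_of_norm_eq_sqrt_three hu hv huv hw hw3
  exact red_add_two_smul_add_of_lattice hred hblue hL hnotri hu'Λ hv'Λ hu' hv' huv' hxL hx hxw

end Colouring

/-- no red ℓ₂ and no blue ℓ₅; if a unit triangular lattice 𝔏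
contains no red equilateral triangle of side √3, and A, B are red points of 𝔏
at distance √3, then every lattice point on the line AB is red. -/
theorem stmt_10 (c : Plane → Color) (hred : NoRedL2 c) (hblue : ¬ HasBlueL5 c)
    (p u v : Plane) (hu : ‖u‖ = 1) (hv : ‖v‖ = 1) (huv : (inner ℝ u v : ℝ) = 1 / 2)
    (L : Set Plane) (hL : L = {x : Plane | ∃ m n : ℤ, x = p + (m : ℝ) • u + (n : ℝ) • v})
    (hnotri : ¬ ∃ A B C : Plane, A ∈ L ∧ B ∈ L ∧ C ∈ L ∧
      c A = Color.red ∧ c B = Color.red ∧ c C = Color.red ∧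
      dist A B = Real.sqrt 3 ∧ dist B C = Real.sqrt 3 ∧ dist A C = Real.sqrt 3)
    (A B : Plane) (hAL : A ∈ L) (hBL : B ∈ L)
    (hA : c A = Color.red) (hB : c B = Color.red)
    (hAB : dist A B = Real.sqrt 3) :
    ∀ k : ℤ, c (A + (k : ℝ) • (B - A)) = Color.red := by
  set Λ := AddSubgroup.closure ({u, v} : Set Plane)
  have hLΛ : ∀ x ∈ L, ∀ w ∈ Λ, x + w ∈ L := by
    subst hL
    exact fun _ hx _ hw => add_mem_of_mem_closure_pair hx hw
  have hdΛ : B - A ∈ Λ := by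
    subst hL
    exact sub_mem_closure_pair hAL hBL
  have hd3 : ‖B - A‖ = √3 := by rw [← dist_eq_norm', hAB]
  have hmem : ∀ k : ℤ, A + (k : ℝ) • (B - A) ∈ L := fun k => by
    simpa only [Int.cast_smul_eq_zsmul] using hLΛ A hAL _ (Λ.zsmul_mem hdΛ k)
  refine Int.forall_of_two_step (by simpa using hA) (by simpa using hB) (fun k hk hk₁ => ?_)
    (fun k hk₁ hk => ?_)
  · convert red_add_two_smul_of_mem_closure_pair hred hblue hu hv huv hLΛ hnotri
      (hmem k) hdΛ hd3 hk (by convert hk₁ using 2; push_cast; module) using 2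
    push_cast
    module
  · convert red_add_two_smul_of_mem_closure_pair hred hblue hu hv huv hLΛ hnotri
      (hmem (k + 1)) (Λ.neg_mem hdΛ) (by rwa [norm_neg]) hk₁
      (by convert hk using 2; push_cast; module) using 2
    push_cast
    module
end
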